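/- Let p be prime, 2 ≤ s < p, and τ = (1 2 … p) ∈ S_{p+s}. Let θ ∈ S_p ⊂ S_{p+s} be a permutation of {1,…,p} of order p-1 with θτθ⁻¹ = τ^a for a generator a of (ℤ/p)^×, and let H_s ⊂ S_{p+s} be the subgroup of permutations fixing {1,…,p} pointwise (permuting only {p+1,…,p+s}). Then N_{A_{p+s}}(⟨τ⟩) = A_{p+s} ∩ ((⟨τ⟩ ⋊ ⟨θ⟩) × H_s). -/

import Mathlib

/-!
Conjugation sends the normalizer `N` of `⟨τ⟩` to `Aut ⟨τ⟩ ≅ (ZMod p)ˣ` with kernel the centralizer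
`C(τ)`; since `θ` is sent to the generator `a`, `N = ⟨θ⟩ ⊔ C(τ)`. A permutation commuting with the
cycle `τ` preserves its support and acts there as a power of `τ`, so `C(τ) = ⟨τ⟩ ⊔ H_s`.
-/

open Equiv Equiv.Perm Subgroup

section PowersModN

variable {G : Type*} [Group G] {n : ℕ} {τ : G}

theorem pow_val_mul (hτ : orderOf τ = n) (x y : ZMod n) :
    τ ^ (x * y).val = (τ ^ x.val) ^ y.val := by
  subst hτ
  rw [ZMod.val_mul, ← pow_mul, pow_mod_orderOf]

theorem pow_val_one (hτ : orderOf τ = n) : τ ^ (1 : ZMod n).val = τ := by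
  rw [ZMod.val_one_eq_one_mod, ← hτ, pow_mod_orderOf, pow_one]

theorem pow_val_injective [NeZero n] (hτ : orderOf τ = n) :
    Function.Injective fun x : ZMod n ↦ τ ^ x.val := by
  intro x y hxy
  have hmod := pow_eq_pow_iff_modEq.mp hxy
  rw [hτ] at hmod
  exact ZMod.val_injective n (hmod.eq_of_lt_of_lt (ZMod.val_lt x) (ZMod.val_lt y))

theorem exists_pow_val_eq_of_mem_zpowers [NeZero n] (hτ : orderOf τ = n) {g : G}
    (hg : g ∈ zpowers τ) : ∃ x : ZMod n, τ ^ x.val = g := by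
  obtain ⟨k, rfl⟩ := hg
  refine ⟨k, ?_⟩
  rw [← zpow_natCast, ZMod.val_intCast, ← hτ, zpow_mod_orderOf]

theorem conj_pow_val_of_conj_eq_pow_val (hτ : orderOf τ = n) {g : G} {x : ZMod n}
    (hg : g * τ * g⁻¹ = τ ^ x.val) (y : ZMod n) :
    g * τ ^ y.val * g⁻¹ = τ ^ (x * y).val := by
  rw [← conj_pow, hg, pow_val_mul hτ]

theorem pow_conj_eq_pow_val_pow (hτ : orderOf τ = n) {θ : G} {a : ZMod n}
    (hconj : θ * τ * θ⁻¹ = τ ^ a.val) (j : ℕ) :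
    θ ^ j * τ * (θ ^ j)⁻¹ = τ ^ (a ^ j).val := by
  induction j with
  | zero => simp [pow_val_one hτ]
  | succ j ih =>
    rw [pow_succ', pow_succ', mul_inv_rev, ← conj_pow_val_of_conj_eq_pow_val hτ hconj, ← ih]
    group

theorem inv_conj_eq_pow_val_inv (hτ : orderOf τ = n) {θ : G} {a : (ZMod n)ˣ}
    (hconj : θ * τ * θ⁻¹ = τ ^ (a : ZMod n).val) :
    θ⁻¹ * τ * θ = τ ^ ((a⁻¹ : (ZMod n)ˣ) : ZMod n).val := by
  have h := conj_pow_val_of_conj_eq_pow_val hτ hconj ((a⁻¹ : (ZMod n)ˣ) : ZMod n)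
  rw [← Units.val_mul, mul_inv_cancel, Units.val_one, pow_val_one hτ] at h
  conv_lhs => rw [← h]
  group

end PowersModN

namespace Subgroup

variable {G : Type*} [Group G] {n : ℕ} {g τ θ : G} {a : (ZMod n)ˣ}

theorem mem_centralizer_zpowers_iff :
    g ∈ centralizer (zpowers τ : Set G) ↔ Commute g τ := by
  rw [zpowers_eq_closure, centralizer_closure, mem_centralizer_singleton_iff]
  rfl

theorem mem_normalizer_zpowers_iff :
    g ∈ normalizer (zpowers τ : Set G) ↔
      g * τ * g⁻¹ ∈ zpowers τ ∧ g⁻¹ * τ * g ∈ zpowers τ := by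
  refine ⟨fun hg ↦ ⟨(mem_normalizer_iff.mp hg τ).mp (mem_zpowers τ), ?_⟩, fun ⟨h₁, h₂⟩ ↦ ?_⟩
  · exact (mem_normalizer_iff.mp hg _).mpr (by simp [mul_assoc])
  · refine mem_normalizer_iff.mpr fun h ↦ ⟨?_, fun hh ↦ ?_⟩
    · rintro ⟨k, rfl⟩
      exact conj_zpow (a := g) ▸ zpow_mem h₁ k
    · obtain ⟨k, hk⟩ := mem_zpowers_iff.mp hh
      have : h = g⁻¹ * τ ^ k * g⁻¹⁻¹ := by rw [hk]; group
      rw [this, ← conj_zpow, inv_inv]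
      exact zpow_mem h₂ k


theorem mem_normalizer_of_conj_eq_pow_val (hτ : orderOf τ = n)
    (hconj : θ * τ * θ⁻¹ = τ ^ (a : ZMod n).val) : θ ∈ normalizer (zpowers τ : Set G) :=
  mem_normalizer_zpowers_iff.mpr
    ⟨hconj ▸ pow_mem (mem_zpowers τ) _, inv_conj_eq_pow_val_inv hτ hconj ▸ pow_mem (mem_zpowers τ) _⟩

theorem exists_unit_conj_eq_pow_val [NeZero n] (hτ : orderOf τ = n)
    (hg : g ∈ normalizer (zpowers τ : Set G)) :
    ∃ u : (ZMod n)ˣ, g * τ * g⁻¹ = τ ^ (u : ZMod n).val := by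
  obtain ⟨h₁, h₂⟩ := mem_normalizer_zpowers_iff.mp hg
  obtain ⟨x, hx⟩ := exists_pow_val_eq_of_mem_zpowers hτ h₁
  obtain ⟨y, hy⟩ := exists_pow_val_eq_of_mem_zpowers hτ h₂
  have hxy : x * y = 1 := pow_val_injective hτ <| by
    calc τ ^ (x * y).val = g * τ ^ y.val * g⁻¹ := (conj_pow_val_of_conj_eq_pow_val hτ hx.symm y).symm
      _ = τ := by rw [hy]; group
      _ = τ ^ (1 : ZMod n).val := (pow_val_one hτ).symm
  exact ⟨Units.mkOfMulEqOne x y hxy, hx.symm⟩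

theorem normalizer_zpowers_eq_zpowers_sup_centralizer [NeZero n] (hτ : orderOf τ = n)
    (ha : zpowers a = ⊤) (hconj : θ * τ * θ⁻¹ = τ ^ (a : ZMod n).val) :
    normalizer (zpowers τ : Set G) = zpowers θ ⊔ centralizer (zpowers τ : Set G) := by
  refine le_antisymm (fun g hg ↦ ?_) (sup_le ?_ (centralizer_le_normalizer _))
  · obtain ⟨u, hu⟩ := exists_unit_conj_eq_pow_val hτ hg
    obtain ⟨j, rfl⟩ : ∃ j : ℕ, a ^ j = u :=
      (Submonoid.mem_powers_iff _ _).mp (mem_powers_iff_mem_zpowers.mpr (ha ▸ mem_top u))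
    have hθj := pow_conj_eq_pow_val_pow hτ hconj j
    rw [← Units.val_pow_eq_pow_val, ← hu] at hθj
    have hcomm : Commute ((θ ^ j)⁻¹ * g) τ := by
      refine mul_inv_eq_iff_eq_mul.mp ?_
      calc (θ ^ j)⁻¹ * g * τ * ((θ ^ j)⁻¹ * g)⁻¹ = (θ ^ j)⁻¹ * (g * τ * g⁻¹) * θ ^ j := by group
        _ = τ := by rw [← hθj]; group
    rw [← mul_inv_cancel_left (θ ^ j) g]
    exact mul_mem (mem_sup_left (pow_mem (mem_zpowers θ) j))
      (mem_sup_right (mem_centralizer_zpowers_iff.mpr hcomm))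
  · exact zpowers_le.mpr (mem_normalizer_of_conj_eq_pow_val hτ hconj)

end Subgroup

namespace Equiv.Perm

variable {α : Type*} [Fintype α] [DecidableEq α]

theorem commute_of_mem_fixingSubgroup_support {c h : Perm α}
    (hh : h ∈ fixingSubgroup (Perm α) (c.support : Set α)) : Commute h c := by
  refine Disjoint.commute fun x ↦ ?_
  by_cases hx : x ∈ c.support
  · exact Or.inl ((mem_fixingSubgroup_iff (Perm α)).mp hh x hx)
  · exact Or.inr (notMem_support.mp hx)

theorem IsCycle.centralizer_zpowers_eq {c : Perm α} (hc : c.IsCycle) :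
    centralizer (zpowers c : Set (Perm α)) =
      zpowers c ⊔ fixingSubgroup (Perm α) (c.support : Set α) := by
  refine le_antisymm (fun g hg ↦ ?_) (sup_le ?_ ?_)
  · obtain ⟨hsupp, hpow⟩ := hc.commute_iff.mp (mem_centralizer_zpowers_iff.mp hg)
    set g₁ := ofSubtype (subtypePerm g hsupp)
    have hfix : g₁⁻¹ * g ∈ fixingSubgroup (Perm α) (c.support : Set α) :=
      (mem_fixingSubgroup_iff (Perm α)).mpr fun x hx ↦ by
        rw [Perm.smul_def, mul_apply, inv_eq_iff_eq, ofSubtype_subtypePerm_of_mem hsupp hx]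
    rw [← mul_inv_cancel_left g₁ g]
    exact mul_mem (mem_sup_left hpow) (mem_sup_right hfix)
  · exact zpowers_le.mpr (mem_centralizer_zpowers_iff.mpr (Commute.refl c))
  · exact fun h hh ↦ mem_centralizer_zpowers_iff.mpr (commute_of_mem_fixingSubgroup_support hh)

end Equiv.Perm

theorem normalizer_in_alternating_general (p s : ℕ) (hp : p.Prime)
    (τ θ : Equiv.Perm (Fin (p + s)))
    (hcyc : τ.IsCycle) (hcard : τ.support.card = p)
    (hτsupp : ∀ x : Fin (p + s), p ≤ x.val → τ x = x)
    (a : (ZMod p)ˣ) (ha : orderOf a = p - 1)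
    (hconj : θ * τ * θ⁻¹ = τ ^ ((a : ZMod p).val))
    (H : Subgroup (Equiv.Perm (Fin (p + s))))
    (hH : ∀ g : Equiv.Perm (Fin (p + s)), g ∈ H ↔ ∀ x : Fin (p + s), x.val < p → g x = x) :
    Subgroup.normalizer (Subgroup.zpowers τ : Set (Equiv.Perm (Fin (p + s)))) ⊓ alternatingGroup (Fin (p + s))
      = alternatingGroup (Fin (p + s)) ⊓
        (Subgroup.zpowers τ ⊔ Subgroup.zpowers θ ⊔ H) := by
  have : Fact p.Prime := ⟨hp⟩
  have hτ : orderOf τ = p := hcyc.orderOf.trans hcard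
  have ha_gen : zpowers a = ⊤ :=
    eq_top_of_card_eq _ (by rw [Nat.card_zpowers, ha, Nat.card_eq_fintype_card, ZMod.card_units])
  have hsupp : τ.support = ({x | x.val < p} : Finset (Fin (p + s))) := by
    refine Finset.eq_of_subset_of_card_le (fun x hx ↦ ?_) ?_
    · simpa using not_le.mp (mt (hτsupp x) (mem_support.mp hx))
    · rw [Fin.card_filter_val_lt, hcard]
      omega
  have hH_fix : H = fixingSubgroup (Perm (Fin (p + s))) (τ.support : Set (Fin (p + s))) := by
    ext g
    simp [hH, mem_fixingSubgroup_iff, hsupp]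
  rw [normalizer_zpowers_eq_zpowers_sup_centralizer hτ ha_gen hconj, hcyc.centralizer_zpowers_eq,
    ← hH_fix, inf_comm, ← sup_assoc, sup_comm (zpowers θ)]

/-- Let `p` be prime, `2 ≤ s < p`, `τ = (1 2 … p) ∈ S_{p+s}` a
`p`-cycle supported on the first `p` points, `θ` a permutation of the first `p`
points of order `p-1` with `θτθ⁻¹ = τ^a` for a generator `a` of `(ℤ/p)ˣ`, and
`H_s` the subgroup of permutations fixing the first `p` points pointwise.  Then
`N_{A_{p+s}}(⟨τ⟩) = A_{p+s} ∩ ((⟨τ⟩ ⋊ ⟨θ⟩) × H_s)`, the internal product being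
the join `⟨τ⟩ ⊔ ⟨θ⟩ ⊔ H_s` of subgroups of `S_{p+s}`. -/
theorem normalizer_in_alternating (p s : ℕ) (hp : p.Prime) (hs2 : 2 ≤ s) (hsp : s < p)
    (τ θ : Equiv.Perm (Fin (p + s)))
    (hcyc : τ.IsCycle) (hcard : τ.support.card = p)
    (hτsupp : ∀ x : Fin (p + s), p ≤ x.val → τ x = x)
    (hθsupp : ∀ x : Fin (p + s), p ≤ x.val → θ x = x)
    (hθord : orderOf θ = p - 1)
    (a : (ZMod p)ˣ) (ha : orderOf a = p - 1)
    (hconj : θ * τ * θ⁻¹ = τ ^ ((a : ZMod p).val))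
    (H : Subgroup (Equiv.Perm (Fin (p + s))))
    (hH : ∀ g : Equiv.Perm (Fin (p + s)), g ∈ H ↔ ∀ x : Fin (p + s), x.val < p → g x = x) :
    Subgroup.normalizer (Subgroup.zpowers τ : Set (Equiv.Perm (Fin (p + s)))) ⊓ alternatingGroup (Fin (p + s))
      = alternatingGroup (Fin (p + s)) ⊓
        (Subgroup.zpowers τ ⊔ Subgroup.zpowers θ ⊔ H) :=
  normalizer_in_alternating_general p s hp τ θ hcyc hcard hτsupp a ha hconj H hH
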